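/- arXiv:solv-int/9306004 — 2 statements merged into one kernel-verified Lean document; each statement's English description precedes it below -/
import Mathlib

section
/- Let φ be a Schwartz function on ℝ and define f(τ) = ∫_ℝ e^{iτ/p} [φ(p) − 1_{|p|≤1} φ(0)] dp + φ(0) ∫_{|q|≥1} e^{iτq} q^{−2} dq. Then f is differentiable at every τ ≠ 0 and f′(τ) = i ∫_ℝ p^{−1} e^{iτ/p} [φ(p) − 1_{|p|≤1} φ(0)] dp + i φ(0) ∫_{|q|≥1} q^{−1} e^{iτq} dq, where the last integral is an improper (conditionally convergent) integral. -/
open MeasureTheory Filter Topology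

noncomputable section Stmt2Aux

private def ee (s q : ℝ) : ℂ := Complex.exp (Complex.I * ((s * q : ℝ) : ℂ))

private lemma norm_ee (s q : ℝ) : ‖ee s q‖ = 1 := by
  simp [ee, Complex.norm_exp]

private def SS : Set ℝ := {q : ℝ | 1 ≤ |q|}
private def SR (R : ℝ) : Set ℝ := {q : ℝ | 1 ≤ |q| ∧ |q| ≤ R}

private lemma measS : MeasurableSet SS := by
  have : SS = (fun q : ℝ => |q|) ⁻¹' Set.Ici 1 := rfl
  rw [this]; exact measurableSet_Ici.preimage (measurable_id.abs)

private lemma measSR (R : ℝ) : MeasurableSet (SR R) := by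
  have : SR R = (fun q : ℝ => |q|) ⁻¹' Set.Icc 1 R := rfl
  rw [this]; exact measurableSet_Icc.preimage (measurable_id.abs)

private lemma SR_eq {R : ℝ} (hR : 1 ≤ R) :
    SR R = Set.Icc (-R) (-1) ∪ Set.Icc 1 R := by
  ext q
  simp only [SR, Set.mem_setOf_eq, Set.mem_union, Set.mem_Icc]
  rcases le_or_gt 0 q with h | h
  · rw [abs_of_nonneg h]; constructor
    · rintro ⟨h1, h2⟩; exact Or.inr ⟨h1, h2⟩
    · rintro (⟨h1, h2⟩ | ⟨h1, h2⟩) <;> constructor <;> linarith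
  · rw [abs_of_neg h]; constructor
    · rintro ⟨h1, h2⟩; exact Or.inl ⟨by linarith, by linarith⟩
    · rintro (⟨h1, h2⟩ | ⟨h1, h2⟩) <;> constructor <;> linarith

private lemma S_diff_SR {R : ℝ} (hR : 1 ≤ R) :
    SS \ SR R = Set.Iio (-R) ∪ Set.Ioi R := by
  ext q
  simp only [SS, SR, Set.mem_diff, Set.mem_setOf_eq, not_and, not_le, Set.mem_union,
    Set.mem_Iio, Set.mem_Ioi]
  rcases le_or_gt 0 q with h | h
  · rw [abs_of_nonneg h]; constructor
    · rintro ⟨h1, h2⟩; exact Or.inr (h2 h1)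
    · rintro (h1 | h1) <;> [linarith; exact ⟨by linarith, fun _ => h1⟩]
  · rw [abs_of_neg h]; constructor
    · rintro ⟨h1, h2⟩; exact Or.inl (by linarith [h2 h1])
    · rintro (h1 | h1) <;> [exact ⟨by linarith, fun _ => by linarith⟩; linarith]

private lemma integrableOn_comp_neg {f : ℝ → ℝ} {s : Set ℝ} (hs : MeasurableSet s)
    (h : IntegrableOn f s) : IntegrableOn (fun x => f (-x)) (Neg.neg ⁻¹' s) := by
  have A : MeasurableEmbedding (fun x : ℝ => -x) :=
    (Homeomorph.neg ℝ).isClosedEmbedding.measurableEmbedding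
  have hmap : (volume : Measure ℝ) = Measure.map Neg.neg volume :=
    (Measure.map_neg_eq_self _).symm
  rw [IntegrableOn] at h ⊢
  rw [hmap, Measure.restrict_map A.measurable hs, A.integrable_map_iff] at h
  exact h

private lemma integrableOn_inv_sq_Ioi {R : ℝ} (hR : 0 < R) :
    IntegrableOn (fun q : ℝ => (q ^ 2)⁻¹) (Set.Ioi R) := by
  have := integrableOn_Ioi_rpow_of_lt (a := (-2 : ℝ)) (by norm_num) hR
  refine this.congr_fun (fun x hx => ?_) measurableSet_Ioi
  have hx0 : (0:ℝ) < x := hR.trans hx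
  beta_reduce
  rw [Real.rpow_neg hx0.le, show ((2:ℝ)) = ((2:ℕ):ℝ) by norm_num, Real.rpow_natCast]

private lemma integral_inv_sq_Ioi {R : ℝ} (hR : 0 < R) :
    ∫ q in Set.Ioi R, (q ^ 2)⁻¹ = R⁻¹ := by
  have h1 : ∫ q in Set.Ioi R, (q ^ 2)⁻¹ = ∫ q in Set.Ioi R, q ^ (-2 : ℝ) := by
    refine setIntegral_congr_fun measurableSet_Ioi (fun x hx => ?_)
    have hx0 : (0:ℝ) < x := hR.trans hx
    rw [Real.rpow_neg hx0.le, show ((2:ℝ)) = ((2:ℕ):ℝ) by norm_num, Real.rpow_natCast]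
  rw [h1, integral_Ioi_rpow_of_lt (by norm_num) hR]
  norm_num
  rw [Real.rpow_neg_one]

private lemma integrableOn_inv_sq_Iio {R : ℝ} (hR : 0 < R) :
    IntegrableOn (fun q : ℝ => (q ^ 2)⁻¹) (Set.Iio (-R)) := by
  have h := integrableOn_comp_neg (f := fun q : ℝ => (q ^ 2)⁻¹) measurableSet_Ioi
    (integrableOn_inv_sq_Ioi hR)
  have : (Neg.neg ⁻¹' Set.Ioi R : Set ℝ) = Set.Iio (-R) := by
    ext x; simp [lt_neg]
  rw [this] at h
  refine h.congr_fun (fun x _ => ?_) measurableSet_Iio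
  simp [neg_sq]

private lemma integral_inv_sq_Iio {R : ℝ} (hR : 0 < R) :
    ∫ q in Set.Iio (-R), (q ^ 2)⁻¹ = R⁻¹ := by
  rw [← integral_Iic_eq_integral_Iio, ← integral_comp_neg_Ioi]
  simp_rw [neg_sq]
  exact integral_inv_sq_Ioi hR


private def J (R s : ℝ) : ℂ := ∫ q in SR R, ee s q / (q:ℂ)^2
private def I2 (s : ℝ) : ℂ := ∫ q in SS, ee s q / (q:ℂ)^2
private def LRd (R s : ℝ) : ℂ := ∫ q in SR R, ee s q / (q:ℂ)
private def Lf (s : ℝ) : ℂ := (I2 s - ee s 1 - ee s (-1)) / (Complex.I * s)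

private lemma meas_e2 (s : ℝ) : Measurable (fun q : ℝ => ee s q / (q:ℂ)^2) := by
  unfold ee; fun_prop

private lemma norm_e2 (s q : ℝ) : ‖ee s q / (q:ℂ)^2‖ = (q^2)⁻¹ := by
  rw [norm_div, norm_ee, norm_pow, Complex.norm_real, Real.norm_eq_abs, sq_abs, one_div]

private lemma integrableOn_inv_sq_S : IntegrableOn (fun q : ℝ => (q ^ 2)⁻¹) SS := by
  have : SS = Set.Iic (-1) ∪ Set.Ici 1 := by
    ext q; simp only [SS, Set.mem_setOf_eq, Set.mem_union, Set.mem_Iic, Set.mem_Ici, le_abs]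
    constructor
    · rintro (h | h); exacts [Or.inr h, Or.inl (by linarith)]
    · rintro (h | h); exacts [Or.inr (by linarith), Or.inl h]
  rw [this]
  exact ((integrableOn_Iic_iff_integrableOn_Iio (f := fun q : ℝ => (q ^ 2)⁻¹)).mpr (integrableOn_inv_sq_Iio one_pos)).union
    ((integrableOn_Ici_iff_integrableOn_Ioi (f := fun q : ℝ => (q ^ 2)⁻¹)).mpr (integrableOn_inv_sq_Ioi one_pos))

private lemma integrableOn_e2 (s : ℝ) {T : Set ℝ} (hTS : T ⊆ SS) :
    IntegrableOn (fun q : ℝ => ee s q / (q:ℂ)^2) T := by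
  refine (integrableOn_inv_sq_S.mono_set hTS).mono' ((meas_e2 s).aestronglyMeasurable) ?_
  filter_upwards with q using le_of_eq (norm_e2 s q)

private lemma tail_bound (s : ℝ) {R : ℝ} (hR : 1 ≤ R) : ‖I2 s - J R s‖ ≤ 2 / R := by
  have hR0 : (0:ℝ) < R := lt_of_lt_of_le one_pos hR
  have hsub : SR R ⊆ SS := fun q hq => hq.1
  have hdiff := integral_diff (measSR R) (integrableOn_e2 s (subset_refl _)) hsub
    (f := fun q : ℝ => ee s q / (q:ℂ)^2) (μ := volume)
  rw [show I2 s - J R s = ∫ q in SS \ SR R, ee s q / (q:ℂ)^2 from hdiff.symm, S_diff_SR hR]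
  have hdisj : Disjoint (Set.Iio (-R)) (Set.Ioi R) := by
    rw [Set.disjoint_left]; intro x hx hx'
    simp only [Set.mem_Iio, Set.mem_Ioi] at hx hx'; linarith
  calc ‖∫ q in Set.Iio (-R) ∪ Set.Ioi R, ee s q / (q:ℂ)^2‖
      ≤ ∫ q in Set.Iio (-R) ∪ Set.Ioi R, ‖ee s q / (q:ℂ)^2‖ := norm_integral_le_integral_norm _
    _ = ∫ q in Set.Iio (-R) ∪ Set.Ioi R, (q^2)⁻¹ := by
        refine setIntegral_congr_fun (measurableSet_Iio.union measurableSet_Ioi) ?_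
        intro q _; exact norm_e2 s q
    _ = (∫ q in Set.Iio (-R), (q^2)⁻¹) + ∫ q in Set.Ioi R, (q^2)⁻¹ :=
        setIntegral_union hdisj measurableSet_Ioi (integrableOn_inv_sq_Iio hR0)
          (integrableOn_inv_sq_Ioi hR0)
    _ = 2 / R := by
        rw [integral_inv_sq_Iio hR0, integral_inv_sq_Ioi hR0]; ring

private lemma tendsto_J (s : ℝ) : Tendsto (fun R => J R s) atTop (𝓝 (I2 s)) := by
  rw [← tendsto_sub_nhds_zero_iff]
  have h2 : Tendsto (fun R : ℝ => 2 / R) atTop (𝓝 0) := by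
    simpa [div_eq_mul_inv] using tendsto_inv_atTop_zero.const_mul (2:ℝ)
  refine squeeze_zero_norm' ?_ h2
  filter_upwards [eventually_ge_atTop (1:ℝ)] with R hR
  rw [norm_sub_rev]; exact tail_bound s hR


private lemma hasDerivAt_ee (s q : ℝ) :
    HasDerivAt (fun q : ℝ => ee s q) (Complex.I * s * ee s q) q := by
  have h0 : HasDerivAt (fun q : ℝ => s * q) s q := by
    simpa using (hasDerivAt_id q).const_mul s
  have h1 : HasDerivAt (fun q : ℝ => ((s * q : ℝ) : ℂ)) ((s : ℝ) : ℂ) q := h0.ofReal_comp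
  have h2 := (h1.const_mul Complex.I).cexp
  simp only [ee]
  convert h2 using 1
  ring

private lemma hasDerivAt_inv_c {q : ℝ} (hq : q ≠ 0) :
    HasDerivAt (fun q : ℝ => -((q:ℂ)⁻¹)) (((q:ℂ)^2)⁻¹) q := by
  have h := ((hasDerivAt_inv hq).neg).ofReal_comp (z := q)
  convert h using 1
  · funext x; simp only [Pi.neg_apply]; push_cast; ring
  · push_cast; ring

private lemma interval_ibp (s : ℝ) {a b : ℝ} (h0 : ∀ q ∈ Set.uIcc a b, q ≠ 0) :
    ∫ q in a..b, ee s q / (q:ℂ)^2 =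
      ee s b * (-((b:ℝ):ℂ)⁻¹) - ee s a * (-((a:ℝ):ℂ)⁻¹)
        + (Complex.I * s) * ∫ q in a..b, ee s q / (q:ℂ) := by
  have hee : Continuous fun q : ℝ => ee s q := by unfold ee; fun_prop
  have hf2 : IntervalIntegrable (fun q : ℝ => ee s q / (q:ℂ)) volume a b := by
    apply ContinuousOn.intervalIntegrable
    exact hee.continuousOn.div (Complex.continuous_ofReal.continuousOn)
      (fun q hq => Complex.ofReal_ne_zero.2 (h0 q hq))
  have hf1 : IntervalIntegrable (fun q : ℝ => ee s q / (q:ℂ)^2) volume a b := by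
    apply ContinuousOn.intervalIntegrable
    exact hee.continuousOn.div ((Complex.continuous_ofReal.pow 2).continuousOn)
      (fun q hq => pow_ne_zero 2 (Complex.ofReal_ne_zero.2 (h0 q hq)))
  have hFTC := intervalIntegral.integral_eq_sub_of_hasDerivAt
    (f := fun q : ℝ => ee s q * (-((q:ℝ):ℂ)⁻¹))
    (f' := fun q : ℝ => (Complex.I * s) * -(ee s q / (q:ℂ)) + ee s q / (q:ℂ)^2)
    (a := a) (b := b)
    (fun q hq => by
      have h1 := (hasDerivAt_ee s q).mul (hasDerivAt_inv_c (h0 q hq))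
      refine HasDerivAt.congr_deriv h1 (Eq.symm ?_)
      ring)
    (((hf2.neg).const_mul _).add hf1)
  have hneg : IntervalIntegrable (fun q : ℝ => (Complex.I * s) * -(ee s q / (q:ℂ)))
      volume a b := by
    simpa using (hf2.neg).const_mul (Complex.I * (s:ℂ))
  have hFTC2 : (∫ q in a..b, (Complex.I * s) * -(ee s q / (q:ℂ)))
      + (∫ q in a..b, ee s q / (q:ℂ)^2)
      = ee s b * (-((b:ℝ):ℂ)⁻¹) - ee s a * (-((a:ℝ):ℂ)⁻¹) := by
    rw [← intervalIntegral.integral_add hneg hf1]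
    simpa using hFTC
  have h3 : (∫ q in a..b, (Complex.I * s) * -(ee s q / (q:ℂ)))
      = (Complex.I * s) * -(∫ q in a..b, ee s q / (q:ℂ)) := by
    rw [intervalIntegral.integral_const_mul, intervalIntegral.integral_neg]
  rw [h3] at hFTC2
  linear_combination hFTC2

private lemma vol_SR_lt (R : ℝ) : volume (SR R) < ⊤ := by
  have hsub : SR R ⊆ Set.Icc (-R) R := fun q hq => by
    have := abs_le.mp hq.2; exact ⟨this.1, this.2⟩
  exact lt_of_le_of_lt (measure_mono hsub) (by rw [Real.volume_Icc]; exact ENNReal.ofReal_lt_top)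

private lemma integrableOn_e1_SR (s R : ℝ) :
    IntegrableOn (fun q : ℝ => ee s q / (q:ℂ)) (SR R) := by
  have hmeas : Measurable (fun q : ℝ => ee s q / (q:ℂ)) := by unfold ee; fun_prop
  refine Integrable.mono' (g := fun _ => (1:ℝ))
    (integrableOn_const (vol_SR_lt R).ne) hmeas.aestronglyMeasurable ?_
  filter_upwards [ae_restrict_mem (measSR R)] with q hq
  rw [norm_div, norm_ee, Complex.norm_real, Real.norm_eq_abs]
  rw [div_le_one (lt_of_lt_of_le one_pos hq.1)]
  exact hq.1

private lemma setIntegral_SR (h : ℝ → ℂ) {R : ℝ} (hR : 1 ≤ R)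
    (hint : IntegrableOn h (SR R)) :
    ∫ q in SR R, h q = (∫ q in (-R)..(-1), h q) + ∫ q in (1:ℝ)..R, h q := by
  have hint' := hint
  rw [SR_eq hR] at hint' ⊢
  have hd : Disjoint (Set.Icc (-R) (-1:ℝ)) (Set.Icc 1 R) := by
    rw [Set.disjoint_left]; intro x hx hx'
    simp only [Set.mem_Icc] at hx hx'; linarith [hx.2, hx'.1]
  rw [setIntegral_union hd measurableSet_Icc (hint'.mono_set Set.subset_union_left)
    (hint'.mono_set Set.subset_union_right)]
  rw [integral_Icc_eq_integral_Ioc, integral_Icc_eq_integral_Ioc,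
    ← intervalIntegral.integral_of_le (by linarith : (-R:ℝ) ≤ -1),
    ← intervalIntegral.integral_of_le (by linarith : (1:ℝ) ≤ R)]

private lemma ibp (s : ℝ) {R : ℝ} (hR : 1 ≤ R) :
    J R s = ee s 1 + ee s (-1) - (ee s R + ee s (-R)) / (R:ℂ)
      + (Complex.I * s) * LRd R s := by
  have hRpos : (0:ℝ) < R := lt_of_lt_of_le one_pos hR
  have h1 : ∀ q ∈ Set.uIcc (1:ℝ) R, q ≠ 0 := by
    intro q hq
    rw [Set.uIcc_of_le (by linarith)] at hq
    intro h; rw [h] at hq; linarith [hq.1]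
  have h2 : ∀ q ∈ Set.uIcc (-R) (-1:ℝ), q ≠ 0 := by
    intro q hq
    rw [Set.uIcc_of_le (by linarith)] at hq
    intro h; rw [h] at hq; linarith [hq.2]
  have hSsub : SR R ⊆ SS := fun q hq => hq.1
  rw [J, LRd, setIntegral_SR _ hR (integrableOn_e2 s hSsub),
    setIntegral_SR _ hR (integrableOn_e1_SR s R),
    interval_ibp s h2, interval_ibp s h1]
  have hRC : ((R:ℝ):ℂ) ≠ 0 := Complex.ofReal_ne_zero.2 (ne_of_gt hRpos)
  push_cast
  field_simp
  ring

private lemma LR_sub_Lf {s : ℝ} (hs : s ≠ 0) {R : ℝ} (hR : 1 ≤ R) :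
    ‖LRd R s - Lf s‖ ≤ 4 / (R * |s|) := by
  have hRpos : (0:ℝ) < R := lt_of_lt_of_le one_pos hR
  have hIs : (Complex.I * s) ≠ 0 :=
    mul_ne_zero Complex.I_ne_zero (Complex.ofReal_ne_zero.2 hs)
  have h2 : (Complex.I * s) * Lf s = I2 s - ee s 1 - ee s (-1) := by
    rw [Lf, mul_div_cancel₀ _ hIs]
  have key : (Complex.I * s) * (LRd R s - Lf s)
      = (J R s - I2 s) + (ee s R + ee s (-R)) / (R:ℂ) := by
    linear_combination - ibp s hR - h2
  have hnorm1 : ‖(Complex.I * s) * (LRd R s - Lf s)‖ = |s| * ‖LRd R s - Lf s‖ := by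
    rw [norm_mul, norm_mul, Complex.norm_I, Complex.norm_real, Real.norm_eq_abs, one_mul]
  have hb : ‖(J R s - I2 s) + (ee s R + ee s (-R)) / (R:ℂ)‖ ≤ 4 / R := by
    refine le_trans (norm_add_le _ _) ?_
    have hb1 : ‖J R s - I2 s‖ ≤ 2 / R := by rw [norm_sub_rev]; exact tail_bound s hR
    have hb2 : ‖(ee s R + ee s (-R)) / (R:ℂ)‖ ≤ 2 / R := by
      rw [norm_div, Complex.norm_real, Real.norm_eq_abs, abs_of_pos hRpos]
      gcongr
      exact le_trans (norm_add_le _ _) (by rw [norm_ee, norm_ee]; norm_num)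
    have h4 : 2/R + 2/R = 4/R := by ring
    linarith
  have hfin : |s| * ‖LRd R s - Lf s‖ ≤ 4 / R := by
    rw [← hnorm1, key]; exact hb
  rw [← div_div, le_div_iff₀ (abs_pos.mpr hs)]
  calc ‖LRd R s - Lf s‖ * |s| = |s| * ‖LRd R s - Lf s‖ := mul_comm _ _
    _ ≤ 4 / R := hfin

private lemma tendsto_LR {s : ℝ} (hs : s ≠ 0) :
    Tendsto (fun R => LRd R s) atTop (𝓝 (Lf s)) := by
  rw [← tendsto_sub_nhds_zero_iff]
  have h2 : Tendsto (fun R : ℝ => 4 / (R * |s|)) atTop (𝓝 0) := by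
    have heq : (fun R : ℝ => 4 / (R * |s|)) = fun R : ℝ => (4/|s|) * R⁻¹ := by
      funext R; rw [mul_comm R, ← div_div, div_eq_mul_inv (4/|s|)]
    rw [heq, show (0:ℝ) = (4/|s|) * 0 by ring]
    exact tendsto_inv_atTop_zero.const_mul _
  refine squeeze_zero_norm' ?_ h2
  filter_upwards [eventually_ge_atTop (1:ℝ)] with R hR using LR_sub_Lf hs hR


private lemma hasDerivAt_J (R s : ℝ) :
    HasDerivAt (fun s => J R s) (Complex.I * LRd R s) s := by
  have key := hasDerivAt_integral_of_dominated_loc_of_deriv_le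
    (μ := volume.restrict (SR R)) (x₀ := s)
    (F := fun s q => ee s q / (q:ℂ)^2)
    (F' := fun s q => Complex.I * q * ee s q / (q:ℂ)^2)
    (bound := fun _ => (1:ℝ)) (s := Metric.ball s 1) (Metric.ball_mem_nhds _ one_pos)
    (Eventually.of_forall fun x => (meas_e2 x).aestronglyMeasurable)
    (integrableOn_e2 s (fun q hq => hq.1))
    ((show Measurable (fun q : ℝ => Complex.I * q * ee s q / (q:ℂ)^2) by
      unfold ee; fun_prop).aestronglyMeasurable)
    ?_ (integrableOn_const (vol_SR_lt R).ne) ?_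
  · have h2 : (∫ q in SR R, Complex.I * q * ee s q / (q:ℂ)^2) = Complex.I * LRd R s := by
      rw [LRd, ← integral_const_mul]
      refine setIntegral_congr_fun (measSR R) (fun q hq => ?_)
      have hq1 : 1 ≤ |q| := hq.1
      have hqne : q ≠ 0 := fun h => by rw [h] at hq1; norm_num at hq1
      have hq0 : ((q:ℝ):ℂ) ≠ 0 := Complex.ofReal_ne_zero.2 hqne
      field_simp
    rw [← h2]
    exact key.2
  · -- bound
    filter_upwards [ae_restrict_mem (measSR R)] with q hq x _
    have h1 : 1 ≤ |q| := hq.1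
    rw [norm_div, norm_mul, norm_mul, Complex.norm_I, one_mul, Complex.norm_real,
      norm_ee, mul_one, norm_pow, Complex.norm_real, Real.norm_eq_abs]
    rw [div_le_one (by positivity)]
    nlinarith
  · -- differentiability
    refine Eventually.of_forall fun q => fun x _ => ?_
    have h0 : HasDerivAt (fun x : ℝ => ((x * q : ℝ) : ℂ)) ((q:ℝ):ℂ) x := by
      have : HasDerivAt (fun x : ℝ => x * q) q x := by
        simpa using (hasDerivAt_id x).mul_const q
      exact this.ofReal_comp
    have h2 := ((h0.const_mul Complex.I).cexp).div_const ((q:ℂ)^2)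
    refine HasDerivAt.congr_deriv h2 (Eq.symm ?_)
    show Complex.I * q * ee x q / (q:ℂ)^2 = _
    unfold ee
    ring

private lemma isOpen_U (a : ℝ) : IsOpen {s : ℝ | a < |s|} :=
  isOpen_lt continuous_const continuous_abs

private lemma hasDerivAt_I2 {t : ℝ} (ht : t ≠ 0) :
    HasDerivAt I2 (Complex.I * Lf t) t := by
  set a := |t| / 2 with ha
  have ha0 : 0 < a := by positivity
  have hmem : t ∈ {s : ℝ | a < |s|} := by
    simp only [Set.mem_setOf_eq, ha]; linarith [abs_pos.mpr ht]
  have hunif : TendstoUniformlyOn (fun R s => Complex.I * LRd R s)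
      (fun s => Complex.I * Lf s) atTop {s : ℝ | a < |s|} := by
    rw [Metric.tendstoUniformlyOn_iff]
    intro ε hε
    have htend : Tendsto (fun R : ℝ => 4 / (R * a)) atTop (𝓝 0) := by
      have heq : (fun R : ℝ => 4 / (R * a)) = fun R : ℝ => (4/a) * R⁻¹ := by
        funext R; rw [mul_comm R, ← div_div, div_eq_mul_inv (4/a)]
      rw [heq, show (0:ℝ) = (4/a) * 0 by ring]
      exact tendsto_inv_atTop_zero.const_mul _
    have hev : ∀ᶠ R : ℝ in atTop, 4 / (R * a) < ε := htend.eventually (gt_mem_nhds hε)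
    filter_upwards [hev, eventually_ge_atTop (1:ℝ)] with R hRe hR1 s hs
    have hsa : a < |s| := hs
    have hs0 : s ≠ 0 := by
      intro h; rw [h] at hsa; simp at hsa; linarith
    have hR0 : (0:ℝ) < R := lt_of_lt_of_le one_pos hR1
    rw [dist_eq_norm, ← mul_sub, norm_mul, Complex.norm_I, one_mul, norm_sub_rev]
    calc ‖LRd R s - Lf s‖ ≤ 4 / (R * |s|) := LR_sub_Lf hs0 hR1
      _ ≤ 4 / (R * a) := by gcongr
      _ < ε := hRe
  exact hasDerivAt_of_tendstoUniformlyOn (isOpen_U a) hunif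
    (Eventually.of_forall fun R s _ => hasDerivAt_J R s)
    (fun s _ => tendsto_J s) hmem


section Aterm

variable (φ : SchwartzMap ℝ ℂ)

private def gg (p : ℝ) : ℂ := φ p - Set.indicator {x : ℝ | |x| ≤ 1} (fun _ => φ 0) p

private lemma measBall : MeasurableSet {x : ℝ | |x| ≤ 1} := by
  have : {x : ℝ | |x| ≤ 1} = (fun x : ℝ => |x|) ⁻¹' Set.Iic 1 := rfl
  rw [this]; exact measurableSet_Iic.preimage (measurable_id.abs)

private lemma volBall : volume {x : ℝ | |x| ≤ 1} < ⊤ := by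
  have hsub : {x : ℝ | |x| ≤ 1} ⊆ Set.Icc (-1) 1 := fun q hq => abs_le.mp hq
  exact lt_of_le_of_lt (measure_mono hsub) (by rw [Real.volume_Icc]; exact ENNReal.ofReal_lt_top)

private lemma meas_gg : Measurable (gg φ) := by
  apply (φ.continuous.measurable).sub
  exact Measurable.indicator measurable_const (measBall)

private lemma int_gg : Integrable (gg φ) := by
  apply φ.integrable.sub
  exact (integrableOn_const volBall.ne).integrable_indicator measBall

private lemma lipschitz_bound : ∃ M : ℝ, 0 ≤ M ∧ ∀ x y : ℝ, ‖φ x - φ y‖ ≤ M * |x - y| := by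
  obtain ⟨M, hM0, hM⟩ := (SchwartzMap.derivCLM ℝ ℂ φ).decay 0 0
  refine ⟨M, hM0.le, fun x y => ?_⟩
  have hd : ∀ z ∈ (Set.univ : Set ℝ), DifferentiableAt ℝ (fun w => φ w) z :=
    fun z _ => φ.differentiableAt
  have hb : ∀ z ∈ (Set.univ : Set ℝ), ‖deriv (fun w => φ w) z‖ ≤ M := by
    intro z _
    have := hM z
    simp only [pow_zero, one_mul, norm_iteratedFDeriv_zero, SchwartzMap.derivCLM_apply] at this
    exact this
  have := Convex.norm_image_sub_le_of_norm_deriv_le hd hb convex_univ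
    (Set.mem_univ y) (Set.mem_univ x)
  simpa [Real.norm_eq_abs] using this

private lemma norm_eI (x : ℝ) : ‖Complex.exp (Complex.I * (x : ℂ))‖ = 1 := by
  simp [Complex.norm_exp]

private lemma hasDerivAt_A (τ : ℝ) :
    HasDerivAt (fun s => ∫ p : ℝ, Complex.exp (Complex.I * ((s / p : ℝ) : ℂ)) * gg φ p)
      (Complex.I * ∫ p : ℝ, ((p : ℂ))⁻¹ *
        Complex.exp (Complex.I * ((τ / p : ℝ) : ℂ)) * gg φ p) τ := by
  obtain ⟨M, hM0, hM⟩ := lipschitz_bound φ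
  have key := hasDerivAt_integral_of_dominated_loc_of_deriv_le
    (μ := (volume : Measure ℝ)) (x₀ := τ)
    (F := fun s p => Complex.exp (Complex.I * ((s / p : ℝ) : ℂ)) * gg φ p)
    (F' := fun s p => Complex.I * (((p : ℂ))⁻¹ *
      Complex.exp (Complex.I * ((s / p : ℝ) : ℂ)) * gg φ p))
    (bound := fun p => Set.indicator {x : ℝ | |x| ≤ 1} (fun _ => M) p + ‖φ p‖)
    (s := Metric.ball τ 1) (Metric.ball_mem_nhds _ one_pos) ?_ ?_ ?_ ?_ ?_ ?_
  · rw [← integral_const_mul]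
    exact key.2
  · -- measurability of F x
    refine Eventually.of_forall fun x => Measurable.aestronglyMeasurable ?_
    apply Measurable.mul ?_ (meas_gg φ)
    fun_prop
  · -- integrability of F τ
    refine (int_gg φ).norm.mono' (Measurable.aestronglyMeasurable ?_) ?_
    · apply Measurable.mul ?_ (meas_gg φ); fun_prop
    · filter_upwards with p
      rw [norm_mul, norm_eI]
      simp
  · -- measurability of F' τ
    refine Measurable.aestronglyMeasurable ?_
    apply Measurable.const_mul
    apply Measurable.mul ?_ (meas_gg φ)
    apply Measurable.mul ?_ ?_ <;> fun_prop
  · -- bound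
    refine Eventually.of_forall fun p => fun x _ => ?_
    have hnorm : ‖Complex.I * (((p : ℂ))⁻¹ *
        Complex.exp (Complex.I * ((x / p : ℝ) : ℂ)) * gg φ p)‖ = |p|⁻¹ * ‖gg φ p‖ := by
      rw [norm_mul, Complex.norm_I, one_mul, norm_mul, norm_mul, norm_eI, mul_one,
        norm_inv, Complex.norm_real, Real.norm_eq_abs]
    rw [hnorm]
    show |p|⁻¹ * ‖gg φ p‖ ≤ Set.indicator {x : ℝ | |x| ≤ 1} (fun _ => M) p + ‖φ p‖
    rcases le_or_gt |p| 1 with hp | hp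
    · have hmem : p ∈ {x : ℝ | |x| ≤ 1} := hp
      rw [Set.indicator_of_mem hmem]
      have hg : ‖gg φ p‖ ≤ M * |p| := by
        have : gg φ p = φ p - φ 0 := by rw [gg, Set.indicator_of_mem hmem]
        rw [this]
        simpa using hM p 0
      rcases eq_or_ne p 0 with rfl | hp0
      · simp [norm_nonneg]
        positivity
      · have h1 : |p|⁻¹ * ‖gg φ p‖ ≤ |p|⁻¹ * (M * |p|) := by
          apply mul_le_mul_of_nonneg_left hg (by positivity)
        have h2 : |p|⁻¹ * (M * |p|) = M := by
          field_simp
        nlinarith [norm_nonneg (φ p)]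
    · have hmem : p ∉ {x : ℝ | |x| ≤ 1} := by simp only [Set.mem_setOf_eq]; linarith
      rw [Set.indicator_of_notMem hmem]
      have hgp : gg φ p = φ p := by rw [gg, Set.indicator_of_notMem hmem, sub_zero]
      rw [hgp, zero_add]
      have h1 : |p|⁻¹ ≤ 1 := by
        rw [inv_le_one_iff₀]; right; linarith
      nlinarith [norm_nonneg (φ p), inv_nonneg.mpr (abs_nonneg p)]
  · -- integrability of bound
    apply Integrable.add ?_ φ.integrable.norm
    exact (integrableOn_const volBall.ne).integrable_indicator measBall
  · -- differentiability
    refine Eventually.of_forall fun p => fun x _ => ?_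
    rcases eq_or_ne p 0 with rfl | hp0
    · have hconst : (fun s : ℝ => Complex.exp (Complex.I * ((s / 0 : ℝ) : ℂ)) * gg φ 0)
          = fun _ => Complex.exp (Complex.I * ((0 : ℝ) : ℂ)) * gg φ 0 := by
        funext s; rw [div_zero]
      rw [hconst]
      simpa using hasDerivAt_const x (Complex.exp (Complex.I * ((0:ℝ):ℂ)) * gg φ 0)
    · have h0 : HasDerivAt (fun s : ℝ => s / p) (1 / p) x := by
        simpa using (hasDerivAt_id x).div_const p
      have h1 : HasDerivAt (fun s : ℝ => ((s / p : ℝ) : ℂ)) (((1 / p : ℝ) : ℂ)) x :=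
        h0.ofReal_comp
      have h2 := (((h1.const_mul Complex.I).cexp).mul_const (gg φ p))
      refine HasDerivAt.congr_deriv h2 (Eq.symm ?_)
      push_cast
      ring

end Aterm

/-- With `f(τ) = ∫ e^{iτ/p}[φ(p) − 1_{|p|≤1}φ(0)] dp
+ φ(0)∫_{|q|≥1} e^{iτq}/q² dq`, the function `f` is differentiable at every `τ ≠ 0`
with derivative `i∫ p⁻¹e^{iτ/p}[φ(p) − 1_{|p|≤1}φ(0)] dp + iφ(0)·L` where `L` is the
improper (conditionally convergent) integral `∫_{|q|≥1} e^{iτq}/q dq`. -/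
theorem stmt2 (φ : SchwartzMap ℝ ℂ) (f : ℝ → ℂ)
    (hf : ∀ τ : ℝ, f τ =
      (∫ p : ℝ, Complex.exp (Complex.I * ((τ / p : ℝ) : ℂ)) *
          (φ p - Set.indicator {x : ℝ | |x| ≤ 1} (fun _ => φ 0) p)) +
        φ 0 * ∫ q in {q : ℝ | 1 ≤ |q|},
          Complex.exp (Complex.I * ((τ * q : ℝ) : ℂ)) / (q : ℂ) ^ 2)
    (τ : ℝ) (hτ : τ ≠ 0) :
    ∃ L : ℂ,
      Tendsto (fun R : ℝ => ∫ q in {q : ℝ | 1 ≤ |q| ∧ |q| ≤ R},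
          Complex.exp (Complex.I * ((τ * q : ℝ) : ℂ)) / (q : ℂ)) atTop (nhds L) ∧
      HasDerivAt f
        (Complex.I * (∫ p : ℝ, ((p : ℂ))⁻¹ * Complex.exp (Complex.I * ((τ / p : ℝ) : ℂ)) *
            (φ p - Set.indicator {x : ℝ | |x| ≤ 1} (fun _ => φ 0) p)) +
          Complex.I * φ 0 * L) τ := by
  refine ⟨Lf τ, tendsto_LR hτ, ?_⟩
  have hfeq : f = fun s => (∫ p : ℝ, Complex.exp (Complex.I * ((s / p : ℝ) : ℂ)) * gg φ p)
      + φ 0 * I2 s := by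
    funext s
    rw [hf s]
    rfl
  rw [hfeq]
  have h := (hasDerivAt_A φ τ).add ((hasDerivAt_I2 hτ).const_mul (φ 0))
  refine HasDerivAt.congr_deriv h (Eq.symm ?_)
  show _ = _ + φ 0 * (Complex.I * Lf τ)
  rw [show (∫ p : ℝ, ((p : ℂ))⁻¹ * Complex.exp (Complex.I * ((τ / p : ℝ) : ℂ)) *
      (φ p - Set.indicator {x : ℝ | |x| ≤ 1} (fun _ => φ 0) p))
    = ∫ p : ℝ, ((p : ℂ))⁻¹ * Complex.exp (Complex.I * ((τ / p : ℝ) : ℂ)) * gg φ p from rfl]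
  ring

end Stmt2Aux
end

section
/- Let V be a Schwartz function on ℝ² and for t ∈ ℝ define V(t, p₁, p₂) = exp(−it(p₁⁴ + 3p₂²)/p₁) · V(p₁, p₂) for p₁ ≠ 0. Then for each fixed t ≠ 0 and each Schwartz test function ψ of one variable, the function p₁ ↦ ∫_ℝ V(t,p₁,p₂) ψ(p₂) dp₂ tends to 0 as p₁ → 0. -/
/-!
Away from `p₁ = 0` the phase splits as `t p₁³ + (3t/p₁) p₂²`; the first part is a unimodular
constant, so it suffices that `∫ e^{-i (3t/p₁) p²} V(p₁,p) ψ(p) dp → 0`. Replacing `V(p₁,·) ψ` by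
`V(0,·) ψ` costs at most their `L¹` distance, which vanishes by dominated convergence. For the
fixed integrable function `V(0,·) ψ`, the substitution `u = p²` turns the integral into a Fourier
transform at frequency `3t/(2π p₁) → ∞`, which tends to `0` by the Riemann–Lebesgue lemma.
-/

open MeasureTheory Filter Real Set Topology Bornology FourierTransform

lemma tendsto_const_div_nhdsNE_zero_cobounded {𝕜 : Type*} [NormedDivisionRing 𝕜] {a : 𝕜}
    (ha : a ≠ 0) : Tendsto (fun x => a / x) (𝓝[≠] 0) (cobounded 𝕜) := by
  simpa only [div_eq_mul_inv, Function.comp_def] using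
    (tendsto_mul_left_cobounded ha).comp tendsto_inv₀_nhdsNE_zero

theorem integral_eq_integral_Ioi_add_comp_neg {E : Type*} [NormedAddCommGroup E]
    [NormedSpace ℝ E] {f : ℝ → E} (hf : Integrable f) :
    ∫ x, f x = ∫ x in Ioi 0, (f x + f (-x)) := by
  rw [integral_add hf.integrableOn hf.comp_neg.integrableOn, integral_comp_neg_Ioi, neg_zero,
    add_comm, intervalIntegral.integral_Iic_add_Ioi hf.integrableOn hf.integrableOn]

theorem tendsto_integral_norm_mul_sub_of_bounded {X : Type*} [TopologicalSpace X]
    [FirstCountableTopology X] {V : X × ℝ → ℂ} {C : ℝ} (hV : Continuous V) (hC : ∀ z, ‖V z‖ ≤ C)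
    {ψ : ℝ → ℂ} (hψ : Integrable ψ) (x₀ : X) :
    Tendsto (fun x => ∫ p, ‖V (x, p) * ψ p - V (x₀, p) * ψ p‖) (𝓝 x₀) (𝓝 0) := by
  have hlim := tendsto_integral_filter_of_dominated_convergence (l := 𝓝 x₀)
    (F := fun x p => ‖V (x, p) * ψ p - V (x₀, p) * ψ p‖) (f := fun _ => 0)
    (fun p => 2 * C * ‖ψ p‖)
    (Eventually.of_forall fun x => ((hV.comp (.prodMk_right x)).aestronglyMeasurable.mul hψ.1).sub
      ((hV.comp (.prodMk_right x₀)).aestronglyMeasurable.mul hψ.1) |>.norm)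
    (Eventually.of_forall fun x => Eventually.of_forall fun p => ?_)
    (hψ.norm.const_mul _)
    (Eventually.of_forall fun p => ?_)
  · simpa using hlim
  · rw [norm_norm, ← sub_mul, norm_mul]
    gcongr
    linarith [norm_sub_le (V (x, p)) (V (x₀, p)), hC (x, p), hC (x₀, p)]
  · have hcont : Continuous fun x => ‖V (x, p) * ψ p - V (x₀, p) * ψ p‖ := by fun_prop
    simpa using hcont.tendsto x₀

section QuadraticPhase

variable {E : Type*} [NormedAddCommGroup E] [NormedSpace ℂ E]

lemma integrable_fourierChar_sq_smul {g : ℝ → E} (hg : Integrable g) (w : ℝ) :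
    Integrable fun p => 𝐞 (-(p ^ 2 * w)) • g p := by
  have hcont : Continuous fun p : ℝ => 𝐞 (-(p ^ 2 * w)) := by fun_prop
  refine (integrable_norm_iff (hcont.aestronglyMeasurable.fun_smul hg.1)).mp ?_
  simpa only [Circle.norm_smul] using hg.norm

/-- Density of the pushforward of `g p dp` under `p ↦ p ^ 2`. -/
noncomputable def sqPushforward (g : ℝ → E) : ℝ → E :=
  indicator (Ioi 0) fun u => (2 * √u)⁻¹ • (g √u + g (-√u))

theorem integral_fourierChar_sq_smul {g : ℝ → E} (hg : Integrable g) (w : ℝ) :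
    ∫ p, 𝐞 (-(p ^ 2 * w)) • g p = ∫ u, 𝐞 (-(u * w)) • sqPushforward g u := by
  have hcov := integral_comp_rpow_Ioi_of_pos (p := 2) two_pos
    (g := fun u => 𝐞 (-(u * w)) • (2 * √u)⁻¹ • (g √u + g (-√u)))
  simp only [sqPushforward, ← indicator_smul_apply (Ioi 0) fun u => 𝐞 (-(u * w))]
  rw [integral_indicator measurableSet_Ioi, ← hcov,
    integral_eq_integral_Ioi_add_comp_neg (integrable_fourierChar_sq_smul hg w)]
  refine setIntegral_congr_fun measurableSet_Ioi fun x (hx : 0 < x) => ?_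
  have hsqrt : √(x ^ (2 : ℝ)) = x := by rw [rpow_two, sqrt_sq hx.le]
  have hcancel : (2 * x ^ ((2 : ℝ) - 1)) * (2 * x)⁻¹ = 1 := by
    norm_num
    field_simp
  rw [hsqrt, rpow_two, neg_sq, smul_comm _ (𝐞 _), smul_smul, hcancel, one_smul, smul_add]

theorem tendsto_integral_fourierChar_sq_smul_cocompact {g : ℝ → E} (hg : Integrable g) :
    Tendsto (fun w => ∫ p, 𝐞 (-(p ^ 2 * w)) • g p) (cocompact ℝ) (𝓝 0) := by
  simpa only [integral_fourierChar_sq_smul hg] using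
    Real.tendsto_integral_exp_smul_cocompact (sqPushforward g)

theorem tendsto_integral_fourierChar_sq_smul_of_tendsto_integral_norm_sub {α : Type*}
    {l : Filter α} {w : α → ℝ} {F : α → ℝ → E} {g : ℝ → E} (hw : Tendsto w l (cocompact ℝ))
    (hF : ∀ a, Integrable (F a)) (hg : Integrable g)
    (hFg : Tendsto (fun a => ∫ p, ‖F a p - g p‖) l (𝓝 0)) :
    Tendsto (fun a => ∫ p, 𝐞 (-(p ^ 2 * w a)) • F a p) l (𝓝 0) := by
  have hlim := ((tendsto_integral_fourierChar_sq_smul_cocompact hg).comp hw).norm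
  refine squeeze_zero_norm (fun a => ?_) (by simpa using hFg.add hlim)
  have hsplit : ∫ p, 𝐞 (-(p ^ 2 * w a)) • F a p =
      (∫ p, 𝐞 (-(p ^ 2 * w a)) • (F a p - g p)) + ∫ p, 𝐞 (-(p ^ 2 * w a)) • g p := by
    rw [← integral_add
      (integrable_fourierChar_sq_smul (g := fun p => F a p - g p) ((hF a).sub hg) (w a))
      (integrable_fourierChar_sq_smul hg (w a))]
    simp only [smul_sub, sub_add_cancel]
  calc ‖∫ p, 𝐞 (-(p ^ 2 * w a)) • F a p‖
      ≤ ‖∫ p, 𝐞 (-(p ^ 2 * w a)) • (F a p - g p)‖ + ‖∫ p, 𝐞 (-(p ^ 2 * w a)) • g p‖ := by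
        rw [hsplit]; exact norm_add_le _ _
    _ ≤ (∫ p, ‖F a p - g p‖) + ‖∫ p, 𝐞 (-(p ^ 2 * w a)) • g p‖ := by
        gcongr
        exact (norm_integral_le_integral_norm _).trans_eq (by simp only [Circle.norm_smul])

end QuadraticPhase

/-- for Schwartz `V` on ℝ², `V(t,p₁,p₂) = e^{−it(p₁⁴+3p₂²)/p₁} V(p₁,p₂)`,
fixed `t ≠ 0` and a Schwartz test function `ψ` of one variable, the smeared function
`p₁ ↦ ∫ V(t,p₁,p₂) ψ(p₂) dp₂` tends to `0` as `p₁ → 0` (through `p₁ ≠ 0`). -/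
theorem stmt12 (V : SchwartzMap (ℝ × ℝ) ℂ) (ψ : SchwartzMap ℝ ℂ) (t : ℝ) (ht : t ≠ 0) :
    Tendsto (fun p₁ : ℝ => ∫ p₂ : ℝ,
        Complex.exp (-Complex.I * ((t * (p₁ ^ 4 + 3 * p₂ ^ 2) / p₁ : ℝ) : ℂ)) *
          V (p₁, p₂) * ψ p₂)
      (nhdsWithin 0 {x : ℝ | x ≠ 0}) (nhds 0) := by
  set w : ℝ → ℝ := fun p₁ => 3 * t / (2 * π) / p₁
  have hw : Tendsto w (𝓝[≠] 0) (cocompact ℝ) := by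
    rw [← Metric.cobounded_eq_cocompact]
    exact tendsto_const_div_nhdsNE_zero_cobounded (by simp [ht, pi_ne_zero])
  obtain ⟨C, hC⟩ : ∃ C, ∀ z, ‖V z‖ ≤ C :=
    ⟨_, fun z => by simpa using V.norm_pow_mul_le_seminorm ℝ 0 z⟩
  have hVψ (p₁ : ℝ) : Integrable fun p => V (p₁, p) * ψ p :=
    ψ.integrable.bdd_mul (V.continuous.comp (.prodMk_right p₁)).aestronglyMeasurable
      (.of_forall fun p => hC _)
  have hJ := tendsto_integral_fourierChar_sq_smul_of_tendsto_integral_norm_sub hw hVψ (hVψ 0)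
    ((tendsto_integral_norm_mul_sub_of_bounded V.continuous hC ψ.integrable 0).mono_left
      nhdsWithin_le_nhds)
  refine squeeze_zero_norm' ?_ (tendsto_zero_iff_norm_tendsto_zero.mp hJ)
  filter_upwards [self_mem_nhdsWithin] with p₁ (hp₁ : p₁ ≠ 0)
  have hphase (p : ℝ) : Complex.exp (-Complex.I * ((t * (p₁ ^ 4 + 3 * p ^ 2) / p₁ : ℝ) : ℂ)) =
      Complex.exp ((-(t * p₁ ^ 3) : ℝ) * Complex.I) * 𝐞 (-(p ^ 2 * w p₁)) := by
    rw [fourierChar_apply, ← Complex.exp_add]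
    congr 1
    push_cast [w]
    field_simp
    ring
  simp only [hphase, mul_assoc, integral_const_mul, norm_mul, Complex.norm_exp_ofReal_mul_I,
    one_mul, Circle.smul_def, smul_eq_mul, le_refl]
end
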